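/- arXiv:2203.02078 — 2 statements merged into one kernel-verified Lean document; each statement's English description precedes it below -/
import Mathlib

section
/- Let L ≥ 2 and let D be a nonempty type (the collection of network decompositions into L clusters), with C : D → Fin L → ℝ assigning to each decomposition its vector of cluster sum capacities. Assume the following perturbation property: for every θ ∈ D whose capacities are not all equal, writing m = min_{l} C θ l, and for every index i with C θ i = m, there exists θ* ∈ D such that C θ* i > m, C θ* l ≥ C θ l for every other index l with C θ l = m, and C θ* l > m for every index l with C θ l > m. Then every θ ∈ D that maximizes the minimum cluster sum capacity (i.e., min_{l} C θ l ≥ min_{l} C θ' l for all θ' ∈ D) satisfies C θ i = C θ j for all i, j ∈ Fin L; that is, the optimal decomposition has equal cluster sum capacity in all clusters. -/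
open Finset

/-- The minimum cluster sum capacity of the decomposition `θ`. -/
noncomputable def minCap {L : ℕ} (hL : 2 ≤ L) {D : Type*} (C : D → Fin L → ℝ) (θ : D) : ℝ :=
  Finset.univ.inf' (Finset.univ_nonempty_iff.mpr ⟨⟨0, by omega⟩⟩) (C θ)

lemma minCap_le {L : ℕ} (hL : 2 ≤ L) {D : Type*} (C : D → Fin L → ℝ) (θ : D) (l : Fin L) :
    minCap hL C θ ≤ C θ l :=
  Finset.inf'_le _ (Finset.mem_univ l)

lemma exists_minCap {L : ℕ} (hL : 2 ≤ L) {D : Type*} (C : D → Fin L → ℝ) (θ : D) :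
    ∃ l : Fin L, C θ l = minCap hL C θ := by
  obtain ⟨l, -, hl⟩ := Finset.exists_mem_eq_inf' (Finset.univ_nonempty_iff.mpr
    ⟨⟨0, by omega⟩⟩) (C θ)
  exact ⟨l, hl.symm⟩

/-- Under the perturbation property, any decomposition maximizing the minimum cluster
sum capacity has all cluster sum capacities equal. -/
theorem optimal_decomposition_equal_capacities
    {L : ℕ} (hL : 2 ≤ L) {D : Type*} [Nonempty D] (C : D → Fin L → ℝ)
    (hpert : ∀ θ : D, (¬ ∀ i j : Fin L, C θ i = C θ j) →
      ∀ i : Fin L, C θ i = minCap hL C θ →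
        ∃ θs : D, minCap hL C θ < C θs i ∧
          (∀ l : Fin L, l ≠ i → C θ l = minCap hL C θ → C θ l ≤ C θs l) ∧
          (∀ l : Fin L, minCap hL C θ < C θ l → minCap hL C θ < C θs l)) :
    ∀ θ : D, (∀ θ' : D, minCap hL C θ' ≤ minCap hL C θ) →
      ∀ i j : Fin L, C θ i = C θ j := by
  intro θ hopt
  by_contra hne
  set m := minCap hL C θ with hm
  suffices h : ∀ n : ℕ, ∀ θ' : D, minCap hL C θ' = m → (¬ ∀ i j : Fin L, C θ' i = C θ' j) →
      (Finset.univ.filter (fun l => C θ' l = m)).card ≤ n → False by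
    exact h (Finset.univ.filter (fun l => C θ l = m)).card θ rfl hne le_rfl
  intro n
  induction n with
  | zero =>
    intro θ' hmin _ hcard
    obtain ⟨l, hl⟩ := exists_minCap hL C θ'
    have : l ∈ Finset.univ.filter (fun l => C θ' l = m) := by
      simp [hl, hmin]
    have := Finset.card_pos.mpr ⟨l, this⟩
    omega
  | succ n ih =>
    intro θ' hmin hneq hcard
    obtain ⟨i, hi⟩ := exists_minCap hL C θ'
    obtain ⟨θs, h1, h2, h3⟩ := hpert θ' hneq i hi
    rw [hmin] at h1
    -- every component of θs is ≥ m
    have hms : ∀ l : Fin L, m ≤ C θs l := by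
      intro l
      by_cases hcl : C θ' l = m
      · by_cases hli : l = i
        · subst hli; exact le_of_lt h1
        · calc m = C θ' l := hcl.symm
            _ ≤ C θs l := h2 l hli (by rw [hmin]; exact hcl)
      · have hlt : m < C θ' l :=
          lt_of_le_of_ne (hmin ▸ minCap_le hL C θ' l) (Ne.symm hcl)
        have := h3 l (by rw [hmin]; exact hlt)
        rw [hmin] at this
        exact le_of_lt this
    have hmins : minCap hL C θs = m :=
      le_antisymm (hopt θs) (Finset.le_inf' _ _ (fun l _ => hms l))
    -- θs does not have all capacities equal
    have hneqs : ¬ ∀ a b : Fin L, C θs a = C θs b := by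
      intro hall
      obtain ⟨l, hl⟩ := exists_minCap hL C θs
      rw [hmins] at hl
      exact absurd ((hall i l).trans hl) (ne_of_gt h1)
    -- the min-set strictly shrinks
    have hsub : Finset.univ.filter (fun l => C θs l = m) ⊆
        (Finset.univ.filter (fun l => C θ' l = m)).erase i := by
      intro l hl
      rw [Finset.mem_filter] at hl
      have hlm : C θs l = m := hl.2
      have hli : l ≠ i := by
        intro h; rw [h] at hlm; exact absurd hlm (ne_of_gt h1)
      refine Finset.mem_erase.mpr ⟨hli, Finset.mem_filter.mpr ⟨Finset.mem_univ l, ?_⟩⟩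
      by_contra hcl
      have hlt : m < C θ' l :=
        lt_of_le_of_ne (hmin ▸ minCap_le hL C θ' l) (Ne.symm hcl)
      have := h3 l (by rw [hmin]; exact hlt)
      rw [hmin] at this
      exact absurd hlm (ne_of_gt this)
    have hi_mem : i ∈ Finset.univ.filter (fun l => C θ' l = m) := by
      simp [hi, hmin]
    have hcard' : (Finset.univ.filter (fun l => C θs l = m)).card ≤ n := by
      have h1' := Finset.card_le_card hsub
      have h2' := Finset.card_erase_of_mem hi_mem
      omega
    exact ih θs hmins hneqs hcard'
end

section
/- Let L ≥ 2, let D be a type with C : D → Fin L → ℝ, and let θ ∈ D. Suppose i ∈ Fin L is the unique minimizer of C θ, let ε > 0 satisfy ε ≤ C θ l − C θ i for all l ≠ i, and suppose there exists θ* ∈ D with C θ* i = C θ i + ε/3 and C θ* l ≥ C θ l − ε/3 for all l ≠ i. Then min_{l} C θ* l > min_{l} C θ l; in particular θ does not maximize the minimum of C over D. -/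
open Finset

/-- Case 1 (single minimizer): if `i` is the unique minimizer of `C θ`, `0 < ε ≤ C θ l - C θ i`
for all `l ≠ i`, and `θs` raises the capacity of cluster `i` by `ε/3` while every other cluster
loses at most `ε/3`, then the minimum cluster capacity of `θs` strictly exceeds that of `θ`;
in particular `θ` does not maximize the minimum cluster sum capacity. -/
theorem case_one_single_minimizer
    {L : ℕ} (hL : 2 ≤ L) {D : Type*} (C : D → Fin L → ℝ) (θ : D)
    (i : Fin L) (huniq : ∀ l : Fin L, l ≠ i → C θ i < C θ l)
    (ε : ℝ) (hε : 0 < ε) (hεle : ∀ l : Fin L, l ≠ i → ε ≤ C θ l - C θ i)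
    (θs : D) (hup : C θs i = C θ i + ε / 3)
    (hdown : ∀ l : Fin L, l ≠ i → C θ l - ε / 3 ≤ C θs l) :
    minCap hL C θ < minCap hL C θs ∧ ¬ (∀ θ' : D, minCap hL C θ' ≤ minCap hL C θ) := by
  have hle : minCap hL C θ ≤ C θ i := Finset.inf'_le _ (Finset.mem_univ i)
  have hlt : minCap hL C θ < minCap hL C θs := by
    simp only [minCap]; rw [Finset.lt_inf'_iff]
    intro l _
    by_cases h : l = i
    · subst h
      calc minCap hL C θ ≤ C θ l := hle
        _ < C θ l + ε / 3 := by linarith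
        _ = C θs l := hup.symm
    · calc minCap hL C θ ≤ C θ i := hle
        _ < C θ l - ε / 3 := by have := hεle l h; linarith
        _ ≤ C θs l := hdown l h
  exact ⟨hlt, fun hmax => absurd (hmax θs) (not_le.mpr hlt)⟩
end
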